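/- Let Q and Q' be seminormal quasi-crystal graphs of type A_{n−1} satisfying the local quasi-crystal axioms. Then the quasi-tensor product Q ⊗̈ Q' satisfies axioms LQ3 and LQ3': for i ≠ j, if ë_i(x ⊗̈ x') and ë_j(x ⊗̈ x') are both defined then ë_i ë_j(x ⊗̈ x') = ë_j ë_i(x ⊗̈ x') ≠ ⊥, and if f̈_i(x ⊗̈ x') and f̈_j(x ⊗̈ x') are both defined then f̈_i f̈_j(x ⊗̈ x') = f̈_j f̈_i(x ⊗̈ x') ≠ ⊥. -/

import Mathlib

open scoped Classical

/-- Integers together with `-∞` (written `⊥`) and `+∞`. -/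
abbrev ZE := WithBot (WithTop ℤ)

/-- The canonical inclusion of an integer into `ZE`. -/
def ZE.ofInt (m : ℤ) : ZE := ((m : WithTop ℤ) : ZE)

/-- The element `+∞` of `ZE`. -/
def ZE.top : ZE := ((⊤ : WithTop ℤ) : ZE)

/-- Raw data of a quasi-crystal of type `A_{n-1}`.  Indices are 0-based, so the index
set `I = {1, …, n-1}` of the paper corresponds to `{i : ℕ | i + 1 < n}`, and weights
in `ℤ^n` are represented as functions `ℕ → ℤ` (entries with index `≥ n` play no role). -/
structure QCData (n : ℕ) (Q : Type*) where
  e : ℕ → Q → Option Q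
  f : ℕ → Q → Option Q
  eps : ℕ → Q → ZE
  phi : ℕ → Q → ZE
  wt : Q → ℕ → ℤ

namespace QCData

variable {n : ℕ} {Q Q' : Type*}

/-- The simple root `α_i = e_i - e_{i+1}` (0-based coordinates). -/
def alpha (i : ℕ) : ℕ → ℤ := fun m => if m = i then 1 else if m = i + 1 then -1 else 0

/-- `⟨w, α_i⟩ = w_i - w_{i+1}` (which equals `⟨w, α_i^∨⟩` in type `A`). -/
def pair (w : ℕ → ℤ) (i : ℕ) : ℤ := w i - w (i + 1)

/-- Axioms Q1–Q4 of a quasi-crystal of type `A_{n-1}` (Definition 3.1). -/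
def IsQC (D : QCData n Q) : Prop :=
  (∀ i x y, i + 1 < n → (D.e i x = some y ↔ D.f i y = some x)) ∧
  (∀ i x y, i + 1 < n → D.e i x = some y →
    (∀ m, D.wt y m = D.wt x m + alpha i m) ∧
    D.eps i x = D.eps i y + 1 ∧ D.phi i y = D.phi i x + 1) ∧
  (∀ i x, i + 1 < n → D.phi i x = D.eps i x + ZE.ofInt (pair (D.wt x) i)) ∧
  (∀ i x, i + 1 < n → D.eps i x = ⊥ → D.e i x = none ∧ D.f i x = none) ∧
  (∀ i x, i + 1 < n → D.eps i x = ZE.top → D.e i x = none ∧ D.f i x = none)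

/-- Iterated raising operator `ë_i^k`. -/
def eIter (D : QCData n Q) (i : ℕ) : ℕ → Q → Option Q
  | 0, x => some x
  | k + 1, x => (eIter D i k x).bind (D.e i)

/-- Iterated lowering operator `f̈_i^k`. -/
def fIter (D : QCData n Q) (i : ℕ) : ℕ → Q → Option Q
  | 0, x => some x
  | k + 1, x => (fIter D i k x).bind (D.f i)

/-- Seminormality: whenever `ε̈_i(x) ≠ +∞`, `ε̈_i(x) = max {k : ë_i^k(x) ≠ ⊥}` and
`φ̈_i(x) = max {k : f̈_i^k(x) ≠ ⊥}`. -/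
def Seminormal (D : QCData n Q) : Prop :=
  ∀ i x, i + 1 < n → D.eps i x ≠ ZE.top →
    (∃ k : ℕ, D.eps i x = ZE.ofInt k ∧ D.eIter i k x ≠ none ∧ D.eIter i (k + 1) x = none) ∧
    (∃ k : ℕ, D.phi i x = ZE.ofInt k ∧ D.fIter i k x ≠ none ∧ D.fIter i (k + 1) x = none)

/-- Local axiom LQ1. -/
def LQ1 (D : QCData n Q) : Prop :=
  ∀ i x, i + 2 < n → (D.eps i x = 0 ↔ D.phi (i + 1) x = 0)

/-- Local axiom LQ2 (its three parts). -/
def LQ2 (D : QCData n Q) : Prop :=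
  ∀ i x y, i + 1 < n → D.e i x = some y →
    (∀ j, j + 1 < n → (i + 1 < j ∨ j + 1 < i) → D.eps j x = D.eps j y) ∧
    (i + 2 < n →
      (D.eps (i + 1) x ≠ D.eps (i + 1) y ↔ D.eps (i + 1) x = ZE.top ∧ D.eps i y = 0) ∧
      (D.eps (i + 1) x ≠ D.eps (i + 1) y → D.eps (i + 1) y ≠ 0)) ∧
    (∀ j, j + 1 = i →
      (D.phi j x ≠ D.phi j y ↔ D.phi j y = ZE.top ∧ D.phi i x = 0) ∧
      (D.phi j x ≠ D.phi j y → D.phi j x ≠ 0))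

/-- Local axiom LQ3. -/
def LQ3 (D : QCData n Q) : Prop :=
  ∀ i j x, i ≠ j → i + 1 < n → j + 1 < n → D.e i x ≠ none → D.e j x ≠ none →
    (D.e j x).bind (D.e i) = (D.e i x).bind (D.e j) ∧ (D.e j x).bind (D.e i) ≠ none

/-- Local axiom LQ3'. -/
def LQ3' (D : QCData n Q) : Prop :=
  ∀ i j x, i ≠ j → i + 1 < n → j + 1 < n → D.f i x ≠ none → D.f j x ≠ none →
    (D.f j x).bind (D.f i) = (D.f i x).bind (D.f j) ∧ (D.f j x).bind (D.f i) ≠ none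

/-- Stembridge axiom S1 (for type `A_{n-1}`: `α_i ⊥ α_j` iff `|i-j| > 1`). -/
def S1 (D : QCData n Q) : Prop :=
  ∀ i j x y, i + 1 < n → j + 1 < n → i ≠ j → D.e i x = some y →
    (D.eps j y = D.eps j x ∨ D.eps j y = D.eps j x + 1) ∧
    ((i + 1 < j ∨ j + 1 < i) → D.eps j y = D.eps j x ∧ D.phi j y = D.phi j x)

/-- Stembridge axiom S2. -/
def S2 (D : QCData n Q) : Prop :=
  ∀ i j x y, i + 1 < n → j + 1 < n → i ≠ j → D.e i x = some y →
    D.eps j y = D.eps j x → 0 < D.eps j x →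
    ((D.e j x).bind (D.e i) = (D.e i x).bind (D.e j) ∧ (D.e j x).bind (D.e i) ≠ none) ∧
    (∀ z, D.e j x = some z → D.phi i z = D.phi i x)

/-- Stembridge axiom S2'. -/
def S2' (D : QCData n Q) : Prop :=
  ∀ i j x y, i + 1 < n → j + 1 < n → i ≠ j → D.f i x = some y →
    D.phi j y = D.phi j x → 0 < D.phi j x →
    ((D.f j x).bind (D.f i) = (D.f i x).bind (D.f j) ∧ (D.f j x).bind (D.f i) ≠ none) ∧
    (∀ z, D.f j x = some z → D.eps i z = D.eps i x)

/-- Stembridge axiom S3. -/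
def S3 (D : QCData n Q) : Prop :=
  ∀ i j x y z, i + 1 < n → j + 1 < n → i ≠ j → D.e i x = some y → D.e j x = some z →
    D.eps j y = D.eps j x + 1 → D.eps i z = D.eps i x + 1 →
    ((((D.e i x).bind (D.e j)).bind (D.e j)).bind (D.e i) =
        (((D.e j x).bind (D.e i)).bind (D.e i)).bind (D.e j) ∧
      (((D.e i x).bind (D.e j)).bind (D.e j)).bind (D.e i) ≠ none) ∧
    (∀ w, ((D.e i x).bind (D.e j)).bind (D.e j) = some w → D.phi i z = D.phi i w) ∧
    (∀ w, ((D.e j x).bind (D.e i)).bind (D.e i) = some w → D.phi j y = D.phi j w)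

/-- Stembridge axiom S3'. -/
def S3' (D : QCData n Q) : Prop :=
  ∀ i j x y z, i + 1 < n → j + 1 < n → i ≠ j → D.f i x = some y → D.f j x = some z →
    D.phi j y = D.phi j x + 1 → D.phi i z = D.phi i x + 1 →
    ((((D.f i x).bind (D.f j)).bind (D.f j)).bind (D.f i) =
        (((D.f j x).bind (D.f i)).bind (D.f i)).bind (D.f j) ∧
      (((D.f i x).bind (D.f j)).bind (D.f j)).bind (D.f i) ≠ none) ∧
    (∀ w, ((D.f i x).bind (D.f j)).bind (D.f j) = some w → D.eps i z = D.eps i w) ∧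
    (∀ w, ((D.f j x).bind (D.f i)).bind (D.f i) = some w → D.eps j y = D.eps j w)

/-- `D` is a crystal: a quasi-crystal in which `ε̈_i, φ̈_i` never take the value `+∞`. -/
def IsCrystal (D : QCData n Q) : Prop :=
  IsQC D ∧ ∀ i x, i + 1 < n → D.eps i x ≠ ZE.top ∧ D.phi i x ≠ ZE.top

/-- A Stembridge crystal: a seminormal crystal satisfying S1, S2, S2', S3, S3'. -/
def IsStembridge (D : QCData n Q) : Prop :=
  IsCrystal D ∧ Seminormal D ∧ S1 D ∧ S2 D ∧ S2' D ∧ S3 D ∧ S3' D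

/-- Highest weight element. -/
def HW (D : QCData n Q) (u : Q) : Prop := ∀ i, i + 1 < n → D.e i u = none

/-- A single raising step. -/
def estep (D : QCData n Q) (a b : Q) : Prop := ∃ i, i + 1 < n ∧ D.e i a = some b

/-- The partial order `x ⪯ y`: `y` is obtained from `x` by applying raising operators. -/
def hwle (D : QCData n Q) (x y : Q) : Prop := Relation.ReflTransGen (estep D) x y

/-- A single step in the quasi-crystal graph (in either direction). -/
def step (D : QCData n Q) (a b : Q) : Prop :=
  ∃ i, i + 1 < n ∧ (D.e i a = some b ∨ D.f i a = some b)

/-- Connectedness of the quasi-crystal graph. -/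
def Connected (D : QCData n Q) : Prop := ∀ x y, Relation.ReflTransGen (step D) x y

/-- The quasi-tensor product of Cain–Guilherme–Malheiro. -/
noncomputable def tensor (A : QCData n Q) (B : QCData n Q') : QCData n (Q × Q') where
  e := fun i p =>
    if 0 < A.phi i p.1 ∧ 0 < B.eps i p.2 then none
    else if B.eps i p.2 ≤ A.phi i p.1 then (A.e i p.1).map (fun y => (y, p.2))
    else (B.e i p.2).map (fun y => (p.1, y))
  f := fun i p =>
    if 0 < A.phi i p.1 ∧ 0 < B.eps i p.2 then none
    else if B.eps i p.2 < A.phi i p.1 then (A.f i p.1).map (fun y => (y, p.2))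
    else (B.f i p.2).map (fun y => (p.1, y))
  eps := fun i p =>
    if 0 < A.phi i p.1 ∧ 0 < B.eps i p.2 then ZE.top
    else max (A.eps i p.1) (B.eps i p.2 + ZE.ofInt (-(pair (A.wt p.1) i)))
  phi := fun i p =>
    if 0 < A.phi i p.1 ∧ 0 < B.eps i p.2 then ZE.top
    else max (A.phi i p.1 + ZE.ofInt (pair (B.wt p.2) i)) (B.phi i p.2)
  wt := fun p m => A.wt p.1 m + B.wt p.2 m

/-- The standard crystal `B_n` of type `A_{n-1}` (elements `0, …, n-1`, 0-based). -/
def stdB (n : ℕ) : QCData n (Fin n) where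
  e := fun i x => if h : (x : ℕ) = i + 1 then some ⟨i, by have := x.isLt; omega⟩ else none
  f := fun i x => if h : (x : ℕ) = i ∧ i + 1 < n then some ⟨i + 1, h.2⟩ else none
  eps := fun i x => if (x : ℕ) = i + 1 then 1 else 0
  phi := fun i x => if (x : ℕ) = i then 1 else 0
  wt := fun x m => if m = (x : ℕ) then 1 else 0

/-- The `(k+1)`-fold quasi-tensor power `B_n^{⊗̈ (k+1)}` of the standard crystal. -/
noncomputable def stdPow (n : ℕ) : (k : ℕ) → Σ T : Type, QCData n T
  | 0 => ⟨Fin n, stdB n⟩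
  | k + 1 => ⟨(stdPow n k).1 × Fin n, tensor (stdPow n k).2 (stdB n)⟩

/-- The quasi-crystal `Q_C` obtained from a crystal `C` (Definition 4.6). -/
def crystalToQC (D : QCData n Q) : QCData n Q where
  e := fun i x => if D.eps i x = ZE.ofInt (D.wt x (i + 1)) then D.e i x else none
  f := fun i x =>
    (D.f i x).bind fun y => if D.eps i y = ZE.ofInt (D.wt y (i + 1)) then some y else none
  eps := fun i x => if D.eps i x = ZE.ofInt (D.wt x (i + 1)) then D.eps i x else ZE.top
  phi := fun i x =>
    (if D.eps i x = ZE.ofInt (D.wt x (i + 1)) then D.eps i x else ZE.top) +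
      ZE.ofInt (pair (D.wt x) i)
  wt := D.wt

end QCData

open QCData

section Helpers

lemma ZE.ofInt_ne_top (m : ℤ) : ZE.ofInt m ≠ ZE.top := by simp [ZE.ofInt, ZE.top]
lemma ZE.zero_def : (0:ZE) = ZE.ofInt 0 := rfl
lemma ZE.ofInt_inj {a b : ℤ} : ZE.ofInt a = ZE.ofInt b ↔ a = b := by simp [ZE.ofInt]
lemma ZE.ofInt_lt {a b : ℤ} : ZE.ofInt a < ZE.ofInt b ↔ a < b := by simp [ZE.ofInt]
lemma ZE.ofInt_le {a b : ℤ} : ZE.ofInt a ≤ ZE.ofInt b ↔ a ≤ b := by simp [ZE.ofInt]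
lemma ZE.ofInt_add (a b : ℤ) : ZE.ofInt a + ZE.ofInt b = ZE.ofInt (a+b) := by norm_cast
lemma ZE.top_add (m : ℤ) : ZE.top + ZE.ofInt m = ZE.top := by norm_cast
lemma ZE.zero_lt_top : (0:ZE) < ZE.top := by
  rw [ZE.zero_def]; simp only [ZE.ofInt, ZE.top, WithBot.coe_lt_coe]; exact WithTop.coe_lt_top 0

namespace QCData

variable {n : ℕ} {Q : Type*} {D : QCData n Q}

/-- If `ë_i(x)` is defined then `ε̈_i(x) > 0` and `φ̈_i(x)` is a natural number. -/
lemma e_pos (hD : D.IsQC) (hsn : D.Seminormal) {i : ℕ} {x y : Q} (hi : i + 1 < n)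
    (h : D.e i x = some y) :
    (0:ZE) < D.eps i x ∧ ∃ m : ℕ, D.phi i x = ZE.ofInt m := by
  have hnt : D.eps i x ≠ ZE.top := by
    intro ht
    have := (hD.2.2.2.2 i x hi ht).1
    rw [this] at h; exact nomatch h
  obtain ⟨⟨k, hk, hk1, hk2⟩, ⟨m, hm, _, _⟩⟩ := hsn i x hi hnt
  refine ⟨?_, m, hm⟩
  rcases Nat.eq_zero_or_pos k with rfl | hkpos
  · exfalso
    have h1 : D.eIter i 1 x = none := hk2
    rw [show D.eIter i 1 x = D.e i x from by simp [eIter], h] at h1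
    exact nomatch h1
  · rw [hk, ZE.zero_def, ZE.ofInt_lt]; exact_mod_cast hkpos

/-- If `f̈_i(x)` is defined then `φ̈_i(x) > 0` and `ε̈_i(x)` is a natural number. -/
lemma f_pos (hD : D.IsQC) (hsn : D.Seminormal) {i : ℕ} {x y : Q} (hi : i + 1 < n)
    (h : D.f i x = some y) :
    (0:ZE) < D.phi i x ∧ ∃ k : ℕ, D.eps i x = ZE.ofInt k := by
  have hnt : D.eps i x ≠ ZE.top := by
    intro ht
    have := (hD.2.2.2.2 i x hi ht).2
    rw [this] at h; exact nomatch h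
  obtain ⟨⟨k, hk, _, _⟩, ⟨m, hm, hm1, hm2⟩⟩ := hsn i x hi hnt
  refine ⟨?_, k, hk⟩
  rcases Nat.eq_zero_or_pos m with rfl | hmpos
  · exfalso
    have h1 : D.fIter i 1 x = none := hm2
    rw [show D.fIter i 1 x = D.f i x from by simp [fIter], h] at h1
    exact nomatch h1
  · rw [hm, ZE.zero_def, ZE.ofInt_lt]; exact_mod_cast hmpos

/-- In a seminormal quasi-crystal, `ε̈_i(x)` is either `0` or positive. -/
lemma eps_zero_or_pos (hD : D.IsQC) (hsn : D.Seminormal) {i : ℕ} (x : Q) (hi : i + 1 < n) :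
    D.eps i x = 0 ∨ (0:ZE) < D.eps i x := by
  by_cases hnt : D.eps i x = ZE.top
  · right; rw [hnt]; exact ZE.zero_lt_top
  · obtain ⟨⟨k, hk, _, _⟩, _⟩ := hsn i x hi hnt
    rcases Nat.eq_zero_or_pos k with rfl | hkpos
    · left; rw [hk]; rfl
    · right; rw [hk, ZE.zero_def, ZE.ofInt_lt]; exact_mod_cast hkpos

/-- In a seminormal quasi-crystal, `φ̈_i(x)` is either `0` or positive. -/
lemma phi_zero_or_pos (hD : D.IsQC) (hsn : D.Seminormal) {i : ℕ} (x : Q) (hi : i + 1 < n) :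
    D.phi i x = 0 ∨ (0:ZE) < D.phi i x := by
  by_cases hnt : D.eps i x = ZE.top
  · right
    have h2 := hD.2.2.1 i x hi
    rw [hnt, ZE.top_add] at h2
    rw [h2]; exact ZE.zero_lt_top
  · obtain ⟨_, ⟨m, hm, _, _⟩⟩ := hsn i x hi hnt
    rcases Nat.eq_zero_or_pos m with rfl | hmpos
    · left; rw [hm]; rfl
    · right; rw [hm, ZE.zero_def, ZE.ofInt_lt]; exact_mod_cast hmpos

/-- Transport of `ε̈_i = 0` along an `ë_j`-edge when `j ≠ i, i - 1`. -/
lemma eps_transport (hD : D.IsQC) (hD2 : D.LQ2) {i j : ℕ} {u v : Q}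
    (hi : i + 1 < n) (hj : j + 1 < n) (hedge : D.e j u = some v)
    (hfar : i + 1 < j ∨ j + 1 < i ∨ i = j + 1)
    (h0 : D.eps i u = 0 ∨ D.eps i v = 0) : D.eps i u = D.eps i v := by
  rcases hfar with h | h | h
  · exact (hD2 j u v hj hedge).1 i hi (Or.inr h)
  · exact (hD2 j u v hj hedge).1 i hi (Or.inl h)
  · subst h
    have h2 := ((hD2 j u v hj hedge).2.1 (by omega))
    by_contra hne
    rcases h0 with h0 | h0
    · have := (h2.1.mp hne).1
      rw [h0, ZE.zero_def] at this
      exact ZE.ofInt_ne_top 0 this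
    · exact h2.2 hne h0

/-- Transport of `φ̈_j = 0` along an `ë_i`-edge when `j ≠ i, i + 1`. -/
lemma phi_transport (hD : D.IsQC) (hD2 : D.LQ2) {i j : ℕ} {u v : Q}
    (hi : i + 1 < n) (hj : j + 1 < n) (hedge : D.e i u = some v)
    (hfar : i + 1 < j ∨ j + 1 < i ∨ j + 1 = i)
    (h0 : D.phi j u = 0 ∨ D.phi j v = 0) : D.phi j u = D.phi j v := by
  rcases hfar with h | h | h
  all_goals try {
    -- far cases: use LQ2(1) and the weight computation
    have heps : D.eps j u = D.eps j v := by
      first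
      | exact (hD2 i u v hi hedge).1 j hj (Or.inl h)
      | exact (hD2 i u v hi hedge).1 j hj (Or.inr h)
    have hwt := (hD.2.1 i u v hi hedge).1
    have hpair : pair (D.wt u) j = pair (D.wt v) j := by
      simp only [pair, hwt j, hwt (j+1), alpha]
      have h1 : ¬ (j = i) := by omega
      have h2 : ¬ (j = i + 1) := by omega
      have h3 : ¬ (j + 1 = i) := by omega
      have h4 : ¬ (j + 1 = i + 1) := by omega
      rw [if_neg h1, if_neg h2, if_neg h3, if_neg h4]
      ring
    rw [hD.2.2.1 j u hj, hD.2.2.1 j v hj, heps, hpair] }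
  · have h2 := (hD2 i u v hi hedge).2.2 j h
    by_contra hne
    rcases h0 with h0 | h0
    · exact h2.2 hne h0
    · have := (h2.1.mp hne).1
      rw [h0, ZE.zero_def] at this
      exact ZE.ofInt_ne_top 0 this

variable {Q' : Type*} {A : QCData n Q} {B : QCData n Q'}

/-- Characterization of `ë_i` on the quasi-tensor product. -/
lemma tensor_e_some (hA : A.IsQC) (hAsn : A.Seminormal) (hB : B.IsQC) (hBsn : B.Seminormal)
    {i : ℕ} (hi : i + 1 < n) {x : Q} {x' : Q'} {p : Q × Q'} :
    (tensor A B).e i (x, x') = some p ↔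
      (B.eps i x' = 0 ∧ ∃ y, A.e i x = some y ∧ p = (y, x')) ∨
      (A.phi i x = 0 ∧ ∃ y', B.e i x' = some y' ∧ p = (x, y')) := by
  constructor
  · intro h
    simp only [tensor] at h
    split_ifs at h with h1 h2
    · -- left action
      obtain ⟨y, hy, hpy⟩ := Option.map_eq_some_iff.mp h
      have hz : B.eps i x' = 0 := by
        rcases eps_zero_or_pos hB hBsn x' hi with h0 | h0
        · exact h0
        · exact absurd ⟨lt_of_lt_of_le h0 h2, h0⟩ h1
      exact Or.inl ⟨hz, y, hy, hpy.symm⟩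
    · -- right action
      obtain ⟨y', hy', hpy⟩ := Option.map_eq_some_iff.mp h
      have hpos := (e_pos hB hBsn hi hy').1
      have hz : A.phi i x = 0 := by
        rcases phi_zero_or_pos hA hAsn x hi with h0 | h0
        · exact h0
        · exact absurd ⟨h0, hpos⟩ h1
      exact Or.inr ⟨hz, y', hy', hpy.symm⟩
  · rintro (⟨hz, y, hy, rfl⟩ | ⟨hz, y', hy', rfl⟩)
    · obtain ⟨_, m, hm⟩ := e_pos hA hAsn hi hy
      have hle : B.eps i x' ≤ A.phi i x := by
        rw [hz, hm, ZE.zero_def, ZE.ofInt_le]; exact_mod_cast Nat.zero_le m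
      have hc : ¬(0 < A.phi i x ∧ 0 < B.eps i x') := by
        rw [hz]; exact fun hh => lt_irrefl 0 hh.2
      show (if _ then _ else _) = _
      rw [if_neg hc, if_pos hle, hy, Option.map_some]
    · have hpos := (e_pos hB hBsn hi hy').1
      have hlt : ¬ B.eps i x' ≤ A.phi i x := by
        rw [hz]; exact not_le.mpr hpos
      have hc : ¬(0 < A.phi i x ∧ 0 < B.eps i x') := by
        rw [hz]; exact fun hh => lt_irrefl 0 hh.1
      show (if _ then _ else _) = _
      rw [if_neg hc, if_neg hlt, hy', Option.map_some]

/-- Characterization of `f̈_i` on the quasi-tensor product. -/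
lemma tensor_f_some (hA : A.IsQC) (hAsn : A.Seminormal) (hB : B.IsQC) (hBsn : B.Seminormal)
    {i : ℕ} (hi : i + 1 < n) {x : Q} {x' : Q'} {p : Q × Q'} :
    (tensor A B).f i (x, x') = some p ↔
      (B.eps i x' = 0 ∧ ∃ y, A.f i x = some y ∧ p = (y, x')) ∨
      (A.phi i x = 0 ∧ ∃ y', B.f i x' = some y' ∧ p = (x, y')) := by
  constructor
  · intro h
    simp only [tensor] at h
    split_ifs at h with h1 h2
    · obtain ⟨y, hy, hpy⟩ := Option.map_eq_some_iff.mp h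
      have hpos := (f_pos hA hAsn hi hy).1
      have hz : B.eps i x' = 0 := by
        rcases eps_zero_or_pos hB hBsn x' hi with h0 | h0
        · exact h0
        · exact absurd ⟨hpos, h0⟩ h1
      exact Or.inl ⟨hz, y, hy, hpy.symm⟩
    · obtain ⟨y', hy', hpy⟩ := Option.map_eq_some_iff.mp h
      have hle : A.phi i x ≤ B.eps i x' := not_lt.mp h2
      have hz : A.phi i x = 0 := by
        rcases phi_zero_or_pos hA hAsn x hi with h0 | h0
        · exact h0
        · exact absurd ⟨h0, lt_of_lt_of_le h0 hle⟩ h1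
      exact Or.inr ⟨hz, y', hy', hpy.symm⟩
  · rintro (⟨hz, y, hy, rfl⟩ | ⟨hz, y', hy', rfl⟩)
    · have hpos := (f_pos hA hAsn hi hy).1
      have hlt : B.eps i x' < A.phi i x := by rw [hz]; exact hpos
      have hc : ¬(0 < A.phi i x ∧ 0 < B.eps i x') := by
        rw [hz]; exact fun hh => lt_irrefl 0 hh.2
      show (if _ then _ else _) = _
      rw [if_neg hc, if_pos hlt, hy, Option.map_some]
    · obtain ⟨_, k, hk⟩ := f_pos hB hBsn hi hy'
      have hle : ¬ B.eps i x' < A.phi i x := by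
        rw [hz, hk]
        exact not_lt.mpr (by rw [ZE.zero_def, ZE.ofInt_le]; exact_mod_cast Nat.zero_le k)
      have hc : ¬(0 < A.phi i x ∧ 0 < B.eps i x') := by
        rw [hz]; exact fun hh => lt_irrefl 0 hh.1
      show (if _ then _ else _) = _
      rw [if_neg hc, if_neg hle, hy', Option.map_some]

/-- The mixed case for `ë`: `i` acts on the left factor, `j` on the right. -/
lemma key_e_LR (hA : A.IsQC) (hAsn : A.Seminormal) (hA1 : A.LQ1) (hA2 : A.LQ2)
    (hB : B.IsQC) (hBsn : B.Seminormal) (hB2 : B.LQ2)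
    {i j : ℕ} {x : Q} {x' : Q'} {a : Q} {b : Q'}
    (hij : i ≠ j) (hi : i + 1 < n) (hj : j + 1 < n)
    (h1 : B.eps i x' = 0) (h2 : A.e i x = some a)
    (h3 : A.phi j x = 0) (h4 : B.e j x' = some b) :
    (tensor A B).e i (x, b) = some (a, b) ∧ (tensor A B).e j (a, x') = some (a, b) := by
  by_cases hji : j = i + 1
  · exfalso
    have hlq1 := (hA1 i x (by omega)).mpr (by rw [← hji]; exact h3)
    have hpos := (e_pos hA hAsn hi h2).1
    rw [hlq1] at hpos
    exact lt_irrefl _ hpos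
  · have hfar : i + 1 < j ∨ j + 1 < i ∨ i = j + 1 := by omega
    have heb : B.eps i b = 0 := by
      rw [← eps_transport hB hB2 hi hj h4 hfar (Or.inl h1)]; exact h1
    have hfar' : i + 1 < j ∨ j + 1 < i ∨ j + 1 = i := by omega
    have hpa : A.phi j a = 0 := by
      rw [← phi_transport hA hA2 hi hj h2 hfar' (Or.inl h3)]; exact h3
    constructor
    · exact (tensor_e_some hA hAsn hB hBsn hi).mpr (Or.inl ⟨heb, a, h2, rfl⟩)
    · exact (tensor_e_some hA hAsn hB hBsn hj).mpr (Or.inr ⟨hpa, b, h4, rfl⟩)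

/-- The mixed case for `f̈`: `i` acts on the left factor, `j` on the right. -/
lemma key_f_LR (hA : A.IsQC) (hAsn : A.Seminormal) (hA2 : A.LQ2)
    (hB : B.IsQC) (hBsn : B.Seminormal) (hB1 : B.LQ1) (hB2 : B.LQ2)
    {i j : ℕ} {x : Q} {x' : Q'} {a : Q} {b : Q'}
    (hij : i ≠ j) (hi : i + 1 < n) (hj : j + 1 < n)
    (h1 : B.eps i x' = 0) (h2 : A.f i x = some a)
    (h3 : A.phi j x = 0) (h4 : B.f j x' = some b) :
    (tensor A B).f i (x, b) = some (a, b) ∧ (tensor A B).f j (a, x') = some (a, b) := by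
  by_cases hji : j = i + 1
  · exfalso
    have hlq1 := (hB1 i x' (by omega)).mp h1
    have hpos := (f_pos hB hBsn hj h4).1
    rw [← hji] at hlq1
    rw [hlq1] at hpos
    exact lt_irrefl _ hpos
  · have hfar : i + 1 < j ∨ j + 1 < i ∨ i = j + 1 := by omega
    have hedgeB : B.e j b = some x' := (hB.1 j b x' hj).mpr h4
    have heb : B.eps i b = 0 := (eps_transport hB hB2 hi hj hedgeB hfar (Or.inr h1)).trans h1
    have hfar' : i + 1 < j ∨ j + 1 < i ∨ j + 1 = i := by omega
    have hedgeA : A.e i a = some x := (hA.1 i a x hi).mpr h2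
    have hpa : A.phi j a = 0 := (phi_transport hA hA2 hi hj hedgeA hfar' (Or.inr h3)).trans h3
    constructor
    · exact (tensor_f_some hA hAsn hB hBsn hi).mpr (Or.inl ⟨heb, a, h2, rfl⟩)
    · exact (tensor_f_some hA hAsn hB hBsn hj).mpr (Or.inr ⟨hpa, b, h4, rfl⟩)

end QCData

end Helpers

/-- Proposition 3.21: the quasi-tensor product satisfies axioms LQ3 and LQ3'. -/
theorem stmt11 {n : ℕ} {Q Q' : Type*} (A : QCData n Q) (B : QCData n Q')
    (hA : A.IsQC) (hAsn : A.Seminormal)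
    (hA1 : A.LQ1) (hA2 : A.LQ2) (hA3 : A.LQ3) (hA3' : A.LQ3')
    (hB : B.IsQC) (hBsn : B.Seminormal)
    (hB1 : B.LQ1) (hB2 : B.LQ2) (hB3 : B.LQ3) (hB3' : B.LQ3') :
    (tensor A B).LQ3 ∧ (tensor A B).LQ3' := by
  constructor
  · -- LQ3
    intro i j x hij hi hj hie hje
    obtain ⟨x1, x2⟩ := x
    obtain ⟨pi, hpi⟩ := Option.ne_none_iff_exists'.mp hie
    obtain ⟨pj, hpj⟩ := Option.ne_none_iff_exists'.mp hje
    have key : ∃ q, (tensor A B).e i pj = some q ∧ (tensor A B).e j pi = some q := by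
      rcases (tensor_e_some hA hAsn hB hBsn hi).mp hpi with ⟨hi1, a, hi2, rfl⟩ | ⟨hi1, a, hi2, rfl⟩ <;>
        rcases (tensor_e_some hA hAsn hB hBsn hj).mp hpj with ⟨hj1, b, hj2, rfl⟩ | ⟨hj1, b, hj2, rfl⟩
      · -- LL
        obtain ⟨heq, hne⟩ := hA3 i j x1 hij hi hj (by rw [hi2]; simp) (by rw [hj2]; simp)
        rw [hj2, Option.bind_some] at hne heq
        obtain ⟨c, hc⟩ := Option.ne_none_iff_exists'.mp hne
        rw [hc, hi2, Option.bind_some] at heq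
        refine ⟨(c, x2), ?_, ?_⟩
        · exact (tensor_e_some hA hAsn hB hBsn hi).mpr (Or.inl ⟨hi1, c, hc, rfl⟩)
        · exact (tensor_e_some hA hAsn hB hBsn hj).mpr (Or.inl ⟨hj1, c, heq.symm, rfl⟩)
      · -- LR
        obtain ⟨k1, k2⟩ := key_e_LR hA hAsn hA1 hA2 hB hBsn hB2 hij hi hj hi1 hi2 hj1 hj2
        exact ⟨(a, b), k1, k2⟩
      · -- RL
        obtain ⟨k1, k2⟩ := key_e_LR hA hAsn hA1 hA2 hB hBsn hB2 (Ne.symm hij) hj hi hj1 hj2 hi1 hi2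
        exact ⟨(b, a), k2, k1⟩
      · -- RR
        obtain ⟨heq, hne⟩ := hB3 i j x2 hij hi hj (by rw [hi2]; simp) (by rw [hj2]; simp)
        rw [hj2, Option.bind_some] at hne heq
        obtain ⟨c, hc⟩ := Option.ne_none_iff_exists'.mp hne
        rw [hc, hi2, Option.bind_some] at heq
        refine ⟨(x1, c), ?_, ?_⟩
        · exact (tensor_e_some hA hAsn hB hBsn hi).mpr (Or.inr ⟨hi1, c, hc, rfl⟩)
        · exact (tensor_e_some hA hAsn hB hBsn hj).mpr (Or.inr ⟨hj1, c, heq.symm, rfl⟩)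
    obtain ⟨q, hq1, hq2⟩ := key
    rw [hpi, hpj, Option.bind_some, Option.bind_some, hq1, hq2]
    simp
  · -- LQ3'
    intro i j x hij hi hj hie hje
    obtain ⟨x1, x2⟩ := x
    obtain ⟨pi, hpi⟩ := Option.ne_none_iff_exists'.mp hie
    obtain ⟨pj, hpj⟩ := Option.ne_none_iff_exists'.mp hje
    have key : ∃ q, (tensor A B).f i pj = some q ∧ (tensor A B).f j pi = some q := by
      rcases (tensor_f_some hA hAsn hB hBsn hi).mp hpi with ⟨hi1, a, hi2, rfl⟩ | ⟨hi1, a, hi2, rfl⟩ <;>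
        rcases (tensor_f_some hA hAsn hB hBsn hj).mp hpj with ⟨hj1, b, hj2, rfl⟩ | ⟨hj1, b, hj2, rfl⟩
      · obtain ⟨heq, hne⟩ := hA3' i j x1 hij hi hj (by rw [hi2]; simp) (by rw [hj2]; simp)
        rw [hj2, Option.bind_some] at hne heq
        obtain ⟨c, hc⟩ := Option.ne_none_iff_exists'.mp hne
        rw [hc, hi2, Option.bind_some] at heq
        refine ⟨(c, x2), ?_, ?_⟩
        · exact (tensor_f_some hA hAsn hB hBsn hi).mpr (Or.inl ⟨hi1, c, hc, rfl⟩)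
        · exact (tensor_f_some hA hAsn hB hBsn hj).mpr (Or.inl ⟨hj1, c, heq.symm, rfl⟩)
      · obtain ⟨k1, k2⟩ := key_f_LR hA hAsn hA2 hB hBsn hB1 hB2 hij hi hj hi1 hi2 hj1 hj2
        exact ⟨(a, b), k1, k2⟩
      · obtain ⟨k1, k2⟩ := key_f_LR hA hAsn hA2 hB hBsn hB1 hB2 (Ne.symm hij) hj hi hj1 hj2 hi1 hi2
        exact ⟨(b, a), k2, k1⟩
      · obtain ⟨heq, hne⟩ := hB3' i j x2 hij hi hj (by rw [hi2]; simp) (by rw [hj2]; simp)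
        rw [hj2, Option.bind_some] at hne heq
        obtain ⟨c, hc⟩ := Option.ne_none_iff_exists'.mp hne
        rw [hc, hi2, Option.bind_some] at heq
        refine ⟨(x1, c), ?_, ?_⟩
        · exact (tensor_f_some hA hAsn hB hBsn hi).mpr (Or.inr ⟨hi1, c, hc, rfl⟩)
        · exact (tensor_f_some hA hAsn hB hBsn hj).mpr (Or.inr ⟨hj1, c, heq.symm, rfl⟩)
    obtain ⟨q, hq1, hq2⟩ := key
    rw [hpi, hpj, Option.bind_some, Option.bind_some, hq1, hq2]
    simp
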